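/- arXiv:2512.17314 — 4 statements merged into one kernel-verified Lean document; each statement's English description precedes it below -/
import Mathlib

section
/- Let R be a circular order on X with interval topology τ_R. Then R is an open subset of the subspace of X³ consisting of pairwise distinct triples: for every [a,b,c] there exist open neighborhoods U₁, U₂, U₃ of a, b, c respectively such that [a',b',c'] holds for every (a',b',c') ∈ U₁ × U₂ × U₃. -/
namespace Stmt10Aux

variable {X : Type*} {R : X → X → X → Prop}

/-- The chosen "separator" for the arc from `a` to `b`: a point strictly inside if
one exists, otherwise `b` (used as the right end of the neighborhood to its left). -/
noncomputable def rbnd (R : X → X → X → Prop) (a b : X) : X :=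
  letI := Classical.dec (∃ m, R a m b)
  if h : ∃ m, R a m b then h.choose else b

/-- Like `rbnd`, but degenerates to `a` (used as the left end of the neighborhood
to the right of the arc from `a` to `b`). -/
noncomputable def lbnd (R : X → X → X → Prop) (a b : X) : X :=
  letI := Classical.dec (∃ m, R a m b)
  if h : ∃ m, R a m b then h.choose else a

lemma rbnd_pos {a b : X} (h : ∃ m, R a m b) : R a (rbnd R a b) b := by
  simp only [rbnd, dif_pos h]
  exact h.choose_spec

lemma lbnd_pos {a b : X} (h : ∃ m, R a m b) : R a (lbnd R a b) b := by
  simp only [lbnd, dif_pos h]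
  exact h.choose_spec

lemma lbnd_eq_rbnd {a b : X} (h : ∃ m, R a m b) : lbnd R a b = rbnd R a b := by
  simp only [lbnd, rbnd, dif_pos h]

lemma rbnd_neg {a b : X} (h : ¬ ∃ m, R a m b) : rbnd R a b = b := by
  simp only [rbnd, dif_neg h]

lemma lbnd_neg {a b : X} (h : ¬ ∃ m, R a m b) : lbnd R a b = a := by
  simp only [lbnd, dif_neg h]

section Lemmas

variable (cyc : ∀ a b c, R a b c → R b c a)
variable (asym : ∀ a b c, R a b c → ¬ R c b a)
variable (trans : ∀ a b c d, R a b c → R a c d → R a b d)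
variable (total : ∀ a b c : X, a ≠ b → b ≠ c → a ≠ c → R a b c ∨ R a c b)

include cyc asym in
lemma circ_ne12 {a b c : X} (h : R a b c) : a ≠ b := by
  rintro rfl
  exact asym a a c h (cyc _ _ _ (cyc _ _ _ h))

include cyc asym in
lemma circ_ne23 {a b c : X} (h : R a b c) : b ≠ c := by
  rintro rfl
  exact asym a b b h (cyc _ _ _ h)

include asym in
lemma circ_ne13 {a b c : X} (h : R a b c) : a ≠ c := by
  rintro rfl
  exact asym a b a h h

include cyc trans in
/-- Substitution lemma: if `p,q,r` are in cyclic order and `x` lies on the arc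
from `p` to `q`, then `x,q,r` are in cyclic order. -/
lemma circ_sub {s t u x : X} (hstu : R s t u) (hsxt : R s x t) : R x t u :=
  cyc _ _ _ (cyc _ _ _ (trans t u s x (cyc _ _ _ hstu) (cyc _ _ _ (cyc _ _ _ hsxt))))

include cyc trans in
/-- Main combinatorial lemma: points lying in (left-closed) arcs between consecutive
separators `s, t, u` are themselves in cyclic order. -/
lemma circ_main {s t u x y z : X} (hstu : R s t u)
    (hx : x = s ∨ R s x t) (hy : y = t ∨ R t y u) (hz : z = u ∨ R u z s) :
    R x y z := by
  have hxtu : R x t u := hx.elim (fun h => h ▸ hstu) (circ_sub cyc trans hstu)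
  have hxyu : R x y u := hy.elim (fun h => h ▸ hxtu)
    (fun hy' => cyc _ _ _ (cyc _ _ _ (circ_sub cyc trans (cyc _ _ _ hxtu) hy')))
  rcases hz with rfl | hz
  · exact hxyu
  · have huzx : R u z x := by
      rcases hx with rfl | hx'
      · exact hz
      · exact trans u z s x hz (cyc _ _ _ (cyc _ _ _ (trans s x t u hx' hstu)))
    exact cyc _ _ _ (circ_sub cyc trans (cyc _ _ _ (cyc _ _ _ hxyu)) huzx)

include cyc asym trans total in
/-- If the arc from `c` to `a` is empty, a point of the arc `(c, P)` other than `a`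
lies in the arc `(a, P)`. -/
lemma circ_empty_shift {a c x P : X} (hE : ¬ ∃ m, R c m a)
    (h1 : R c x P) (h2 : R c a P) (hxa : x ≠ a) : R a x P := by
  have hxP : x ≠ P := circ_ne23 cyc asym h1
  have haP : a ≠ P := circ_ne23 cyc asym h2
  rcases total a x P hxa.symm hxP haP with haxP | haPx
  · exact haxP
  · exfalso
    have hcx : c ≠ x := circ_ne12 cyc asym h1
    have hca : c ≠ a := circ_ne12 cyc asym h2
    rcases total c x a hcx hxa hca with hcxa | hcax
    · exact hE ⟨x, hcxa⟩
    · have hxca : R x c a := cyc _ _ _ (cyc _ _ _ hcax)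
      have hxaP : R x a P := cyc _ _ _ (cyc _ _ _ haPx)
      exact asym _ _ _ h1 (cyc _ _ _ (cyc _ _ _ (trans x c a P hxca hxaP)))

include cyc trans in
/-- The three separators are in cyclic order. -/
lemma circ_SC {a b c P Q Rr : X} (habc : R a b c)
    (hP : R a P b ∨ P = b) (hQ : R b Q c ∨ Q = c) (hR : R c Rr a ∨ Rr = a) :
    R P Q Rr := by
  rcases hP with hp | hPb
  · have hapc : R a P c := trans _ _ _ _ hp habc
    have hpca : R P c a := cyc _ _ _ hapc
    have hcap : R c a P := cyc _ _ _ hpca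
    rcases hQ with hq | hQc
    · have hcbq : R c b Q := cyc _ _ _ (cyc _ _ _ hq)
      have hbcp : R b c P := trans b c a P (cyc _ _ _ habc) (cyc _ _ _ (cyc _ _ _ hp))
      have hpqc : R P Q c := cyc _ _ _ (trans c P b Q (cyc _ _ _ hbcp) hcbq)
      rcases hR with hr | hRa
      · have hcrp : R c Rr P := trans c Rr a P hr hcap
        exact trans P Q c Rr hpqc (cyc _ _ _ (cyc _ _ _ hcrp))
      · rw [hRa]
        exact trans P Q c a hpqc hpca
    · rw [hQc]
      rcases hR with hr | hRa
      · have hcrp : R c Rr P := trans c Rr a P hr hcap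
        exact cyc _ _ _ (cyc _ _ _ hcrp)
      · rw [hRa]
        exact hpca
  · rw [hPb]
    rcases hQ with hq | hQc
    · rcases hR with hr | hRa
      · have hcrb : R c Rr b := trans c Rr a b hr (cyc _ _ _ (cyc _ _ _ habc))
        exact trans b Q c Rr hq (cyc _ _ _ (cyc _ _ _ hcrb))
      · rw [hRa]
        exact trans b Q c a hq (cyc _ _ _ habc)
    · rw [hQc]
      rcases hR with hr | hRa
      · have hcrb : R c Rr b := trans c Rr a b hr (cyc _ _ _ (cyc _ _ _ habc))
        exact cyc _ _ _ (cyc _ _ _ hcrb)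
      · rw [hRa]
        exact cyc _ _ _ habc

include cyc asym trans in
/-- The base point lies in its neighborhood. -/
lemma circ_mem {a b c : X} (habc : R a b c) : R (lbnd R c a) a (rbnd R a b) := by
  by_cases hca : ∃ m, R c m a
  · have hr : R c (lbnd R c a) a := lbnd_pos hca
    have hacl : R a c (lbnd R c a) := cyc _ _ _ (cyc _ _ _ hr)
    by_cases hab : ∃ m, R a m b
    · have hp : R a (rbnd R a b) b := rbnd_pos hab
      have hapc : R a (rbnd R a b) c := trans _ _ _ _ hp habc
      have hapr : R a (rbnd R a b) (lbnd R c a) := trans _ _ _ _ hapc hacl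
      exact cyc _ _ _ (cyc _ _ _ hapr)
    · rw [rbnd_neg hab]
      have habr : R a b (lbnd R c a) := trans _ _ _ _ habc hacl
      exact cyc _ _ _ (cyc _ _ _ habr)
  · rw [lbnd_neg hca]
    by_cases hab : ∃ m, R a m b
    · have hp : R a (rbnd R a b) b := rbnd_pos hab
      exact cyc _ _ _ (cyc _ _ _ (trans _ _ _ _ hp habc))
    · rw [rbnd_neg hab]
      exact cyc _ _ _ (cyc _ _ _ habc)

include cyc asym trans total in
/-- Membership in the chosen neighborhood implies membership in the left-closed
arc between the separators. -/
lemma circ_mem_char {a b c x : X} (habc : R a b c)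
    (hx : R (lbnd R c a) x (rbnd R a b)) :
    x = rbnd R c a ∨ R (rbnd R c a) x (rbnd R a b) := by
  by_cases hca : ∃ m, R c m a
  · right
    rwa [lbnd_eq_rbnd hca] at hx
  · rw [lbnd_neg hca] at hx
    rw [rbnd_neg hca]
    by_cases hxa : x = a
    · exact Or.inl hxa
    · right
      have h2 : R c a (rbnd R a b) := by
        by_cases hab : ∃ m, R a m b
        · exact cyc _ _ _ (cyc _ _ _ (trans _ _ _ _ (rbnd_pos hab) habc))
        · rw [rbnd_neg hab]
          exact cyc _ _ _ (cyc _ _ _ habc)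
      exact circ_empty_shift cyc asym trans total hca hx h2 hxa

include cyc asym total in
/-- An open arc with distinct endpoints is a generating open set. -/
lemma circ_arc_eq {u v : X} (huv : u ≠ v) :
    {x | R u x v} = ({x | R v x u} ∪ {v, u})ᶜ := by
  ext x
  simp only [Set.mem_compl_iff, Set.mem_union, Set.mem_setOf_eq, Set.mem_insert_iff,
    Set.mem_singleton_iff]
  constructor
  · intro hx
    push_neg
    exact ⟨asym _ _ _ hx, circ_ne23 cyc asym hx, (circ_ne12 cyc asym hx).symm⟩
  · intro hx
    push_neg at hx
    obtain ⟨h1, h2, h3⟩ := hx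
    rcases total u x v h3.symm h2 huv with h | h
    · exact h
    · exact absurd (cyc _ _ _ h) h1

include cyc asym trans in
lemma circ_bnd_ne {a b c : X} (habc : R a b c) : lbnd R c a ≠ rbnd R a b := by
  by_cases hca : ∃ m, R c m a
  · have hr : R c (lbnd R c a) a := lbnd_pos hca
    by_cases hab : ∃ m, R a m b
    · have hp : R a (rbnd R a b) b := rbnd_pos hab
      intro he
      have habr : R a b (lbnd R c a) :=
        trans a b c _ habc (cyc _ _ _ (cyc _ _ _ hr))
      rw [he] at habr
      exact asym _ _ _ hp (cyc _ _ _ habr)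
    · rw [rbnd_neg hab]
      intro he
      rw [he] at hr
      exact asym _ _ _ habc hr
  · rw [lbnd_neg hca]
    by_cases hab : ∃ m, R a m b
    · have hp : R a (rbnd R a b) b := rbnd_pos hab
      intro he
      rw [← he] at hp
      exact asym _ _ _ habc (cyc _ _ _ hp)
    · rw [rbnd_neg hab]
      exact (circ_ne23 cyc asym habc).symm

include cyc asym total in
lemma circ_arc_open {u v : X} (huv : u ≠ v) :
    TopologicalSpace.GenerateOpen
      {s : Set X | ∃ u v : X, s = ({x | R u x v} ∪ {u, v})ᶜ} {x | R u x v} := by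
  rw [circ_arc_eq cyc asym total huv]
  exact TopologicalSpace.GenerateOpen.basic _ ⟨v, u, rfl⟩

include cyc asym in
/-- Disjunctive specification of `rbnd`. -/
lemma rbnd_spec {a b : X} : R a (rbnd R a b) b ∨ rbnd R a b = b := by
  by_cases hab : ∃ m, R a m b
  · exact Or.inl (rbnd_pos hab)
  · exact Or.inr (rbnd_neg hab)

end Lemmas

end Stmt10Aux

/-- A circular order is open on distinct triples: whenever `[a,b,c]`, there are
neighborhoods `U₁, U₂, U₃` of `a, b, c` (open in the interval topology of the
circular order) such that `[a',b',c']` for every `(a',b',c') ∈ U₁ × U₂ × U₃`. -/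
theorem stmt10 {X : Type*} (R : X → X → X → Prop)
    (cyc : ∀ a b c, R a b c → R b c a)
    (asym : ∀ a b c, R a b c → ¬ R c b a)
    (trans : ∀ a b c d, R a b c → R a c d → R a b d)
    (total : ∀ a b c : X, a ≠ b → b ≠ c → a ≠ c → R a b c ∨ R a c b)
    (a b c : X) (h : R a b c) :
    ∃ U₁ U₂ U₃ : Set X,
      letI t : TopologicalSpace X := TopologicalSpace.generateFrom
        {s : Set X | ∃ u v : X, s = ({x | R u x v} ∪ {u, v})ᶜ}
      IsOpen U₁ ∧ IsOpen U₂ ∧ IsOpen U₃ ∧ a ∈ U₁ ∧ b ∈ U₂ ∧ c ∈ U₃ ∧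
        ∀ a' ∈ U₁, ∀ b' ∈ U₂, ∀ c' ∈ U₃, R a' b' c' := by
  classical
  open Stmt10Aux in
  have hbca : R b c a := cyc _ _ _ h
  have hcab : R c a b := cyc _ _ _ hbca
  refine ⟨{x | R (Stmt10Aux.lbnd R c a) x (Stmt10Aux.rbnd R a b)},
          {x | R (Stmt10Aux.lbnd R a b) x (Stmt10Aux.rbnd R b c)},
          {x | R (Stmt10Aux.lbnd R b c) x (Stmt10Aux.rbnd R c a)},
          ?_, ?_, ?_, ?_, ?_, ?_, ?_⟩
  · exact Stmt10Aux.circ_arc_open cyc asym total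
      (Stmt10Aux.circ_bnd_ne cyc asym trans h)
  · exact Stmt10Aux.circ_arc_open cyc asym total
      (Stmt10Aux.circ_bnd_ne cyc asym trans hbca)
  · exact Stmt10Aux.circ_arc_open cyc asym total
      (Stmt10Aux.circ_bnd_ne cyc asym trans hcab)
  · exact Stmt10Aux.circ_mem cyc asym trans h
  · exact Stmt10Aux.circ_mem cyc asym trans hbca
  · exact Stmt10Aux.circ_mem cyc asym trans hcab
  · intro a' ha' b' hb' c' hc'
    have hX := Stmt10Aux.circ_mem_char cyc asym trans total h ha'
    have hY := Stmt10Aux.circ_mem_char cyc asym trans total hbca hb'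
    have hZ := Stmt10Aux.circ_mem_char cyc asym trans total hcab hc'
    have hPQR : R (Stmt10Aux.rbnd R a b) (Stmt10Aux.rbnd R b c) (Stmt10Aux.rbnd R c a) :=
      Stmt10Aux.circ_SC cyc trans h
        (Stmt10Aux.rbnd_spec cyc asym)
        (Stmt10Aux.rbnd_spec cyc asym)
        (Stmt10Aux.rbnd_spec cyc asym)
    exact Stmt10Aux.circ_main cyc trans (cyc _ _ _ (cyc _ _ _ hPQR)) hX hY hZ
end

section
/- Let (X,≤) be a linearly ordered set whose interval topology τ_≤ is compact. Then the interval topology τ_R of the induced circular order R_≤ coincides with τ_≤. -/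
/-- If the interval topology of a linear order on `X` is compact, then the
interval topology of the induced circular order coincides with it. -/
theorem stmt12 {X : Type*} [LinearOrder X] [TopologicalSpace X] [OrderTopology X]
    [CompactSpace X] :
    let R : X → X → X → Prop := fun x y z =>
      (x < y ∧ y < z) ∨ (y < z ∧ z < x) ∨ (z < x ∧ x < y)
    TopologicalSpace.generateFrom
        {s : Set X | ∃ a b : X, s = ({x | R a x b} ∪ {a, b})ᶜ} =
      ‹TopologicalSpace X› := by
  intro R
  apply le_antisymm
  · -- every order-open set is generated-open
    cases isEmpty_or_nonempty X with
    | inl h =>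
      apply le_of_eq
      apply TopologicalSpace.ext
      funext s
      rw [Set.eq_empty_of_isEmpty s]
      exact propext ⟨fun _ => @isOpen_empty X ‹_›, fun _ => @isOpen_empty X (TopologicalSpace.generateFrom _)⟩
    | inr h =>
      obtain ⟨m, -, hm⟩ := (isCompact_univ : IsCompact (Set.univ : Set X)).exists_isLeast Set.univ_nonempty
      obtain ⟨M, -, hM⟩ := (isCompact_univ : IsCompact (Set.univ : Set X)).exists_isGreatest Set.univ_nonempty
      rw [OrderTopology.topology_eq_generate_intervals (α := X)]
      apply le_generateFrom
      rintro s ⟨a, rfl | rfl⟩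
      · apply TopologicalSpace.GenerateOpen.basic
        refine ⟨m, a, ?_⟩
        ext x
        have hmx : m ≤ x := hm (Set.mem_univ x)
        have hma : m ≤ a := hm (Set.mem_univ a)
        simp only [Set.mem_Ioi, Set.mem_compl_iff, Set.mem_union, Set.mem_setOf_eq,
          Set.mem_insert_iff, Set.mem_singleton_iff, R, not_or, not_and]
        constructor
        · intro hax
          exact ⟨⟨fun _ h' => absurd (h'.trans hax) (lt_irrefl x),
                  fun _ => not_lt.mpr hma,
                  fun h' _ => absurd hma h'.not_ge⟩,
                 (hma.trans_lt hax).ne',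
                 hax.ne'⟩
        · rintro ⟨⟨h1, h2, h3⟩, h4, h5⟩
          rcases lt_trichotomy a x with h | h | h
          · exact h
          · exact absurd h.symm h5
          · rcases lt_or_eq_of_le hmx with h' | h'
            · exact absurd h (h1 h')
            · exact absurd h'.symm h4
      · apply TopologicalSpace.GenerateOpen.basic
        refine ⟨a, M, ?_⟩
        ext x
        have hxM : x ≤ M := hM (Set.mem_univ x)
        have haM : a ≤ M := hM (Set.mem_univ a)
        simp only [Set.mem_Iio, Set.mem_compl_iff, Set.mem_union, Set.mem_setOf_eq,
          Set.mem_insert_iff, Set.mem_singleton_iff, R, not_or, not_and]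
        constructor
        · intro hxa
          exact ⟨⟨fun h' _ => absurd (hxa.trans h') (lt_irrefl x),
                  fun _ => not_lt.mpr haM,
                  fun h' _ => absurd haM h'.not_ge⟩,
                 hxa.ne,
                 (hxa.trans_le haM).ne⟩
        · rintro ⟨⟨h1, h2, h3⟩, h4, h5⟩
          rcases lt_trichotomy x a with h | h | h
          · exact h
          · exact absurd h h4
          · rcases lt_or_eq_of_le hxM with h' | h'
            · exact absurd h' (h1 h)
            · exact absurd h' h5
  · -- every generator is open in the order topology
    apply le_generateFrom
    rintro s ⟨a, b, rfl⟩
    rw [isOpen_compl_iff]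
    rcases lt_trichotomy a b with h | h | h
    · have e : {x | R a x b} ∪ {a, b} = Set.Icc a b := by
        ext x
        simp only [Set.mem_union, Set.mem_setOf_eq, Set.mem_insert_iff,
          Set.mem_singleton_iff, Set.mem_Icc, R]
        constructor
        · rintro ((⟨h1, h2⟩ | ⟨h1, h2⟩ | ⟨h1, h2⟩) | rfl | rfl)
          · exact ⟨h1.le, h2.le⟩
          · exact absurd (h2.trans h) (lt_irrefl b)
          · exact absurd (h.trans h1) (lt_irrefl a)
          · exact ⟨le_rfl, h.le⟩
          · exact ⟨h.le, le_rfl⟩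
        · rintro ⟨h1, h2⟩
          rcases lt_or_eq_of_le h1 with h1 | h1
          · rcases lt_or_eq_of_le h2 with h2 | h2
            · exact Or.inl (Or.inl ⟨h1, h2⟩)
            · exact Or.inr (Or.inr h2)
          · exact Or.inr (Or.inl h1.symm)
      rw [e]; exact isClosed_Icc
    · subst h
      have e : {x | R a x a} ∪ {a, a} = {a} := by
        ext x
        simp only [Set.mem_union, Set.mem_setOf_eq, Set.mem_insert_iff,
          Set.mem_singleton_iff, R]
        constructor
        · rintro ((⟨h1, h2⟩ | ⟨h1, h2⟩ | ⟨h1, h2⟩) | rfl | rfl)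
          · exact absurd (h1.trans h2) (lt_irrefl a)
          · exact absurd h2 (lt_irrefl a)
          · exact absurd h1 (lt_irrefl a)
          · rfl
          · rfl
        · rintro rfl; simp
      rw [e]; exact isClosed_singleton
    · have e : {x | R a x b} ∪ {a, b} = Set.Iic b ∪ Set.Ici a := by
        ext x
        simp only [Set.mem_union, Set.mem_setOf_eq, Set.mem_insert_iff,
          Set.mem_singleton_iff, Set.mem_Iic, Set.mem_Ici, R]
        constructor
        · rintro ((⟨h1, h2⟩ | ⟨h1, h2⟩ | ⟨h1, h2⟩) | rfl | rfl)
          · exact Or.inl h2.le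
          · exact Or.inl h1.le
          · exact Or.inr h2.le
          · exact Or.inr le_rfl
          · exact Or.inl le_rfl
        · rintro (h1 | h1)
          · rcases lt_or_eq_of_le h1 with h1 | h1
            · exact Or.inl (Or.inr (Or.inl ⟨h1, h⟩))
            · exact Or.inr (Or.inr h1)
          · rcases lt_or_eq_of_le h1 with h1 | h1
            · exact Or.inl (Or.inr (Or.inr ⟨h, h1⟩))
            · exact Or.inr (Or.inl h1.symm)
      rw [e]; exact isClosed_Iic.union isClosed_Ici
end

section
/- Let (X,R) be a circularly ordered set and A, B, C three pairwise disjoint nonempty convex subsets of X. Then either [A,B,C] or [A,C,B], i.e., either [a,b,c] for all a ∈ A, b ∈ B, c ∈ C, or [a,c,b] for all such a,b,c. -/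
/-- Key lemma: if `x, x'` lie in a convex set `S` while `p, q ∉ S`, then we cannot
have both `R p x q` and `R p q x'`. -/
lemma key15 {X : Type*} (R : X → X → X → Prop)
    (cyc : ∀ a b c, R a b c → R b c a)
    (trans : ∀ a b c d, R a b c → R a c d → R a b d)
    (S : Set X)
    (convS : ∀ a ∈ S, ∀ b ∈ S, ({x | R a x b} ∪ {a, b} ⊆ S) ∨
      ({x | R b x a} ∪ {b, a} ⊆ S))
    {p q x x' : X} (hx : x ∈ S) (hx' : x' ∈ S) (hp : p ∉ S) (hq : q ∉ S)
    (h₁ : R p x q) (h₂ : R p q x') : False := by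
  have hq1 : R q p x := cyc _ _ _ (cyc _ _ _ h₁)
  have hq2 : R q x' p := cyc _ _ _ h₂
  have hq3 : R q x' x := trans _ _ _ _ hq2 hq1
  have hqm : R x q x' := cyc _ _ _ (cyc _ _ _ hq3)
  have hpm : R x' p x := cyc _ _ _ (cyc _ _ _ (trans _ _ _ _ h₁ h₂))
  rcases convS x hx x' hx' with h | h
  · exact hq (h (Or.inl hqm))
  · exact hp (h (Or.inl hpm))


/-- Three pairwise disjoint nonempty convex subsets `A, B, C` of a circularly
ordered set are cyclically ordered: either `[A,B,C]` or `[A,C,B]`. -/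
theorem stmt15 {X : Type*} (R : X → X → X → Prop)
    (cyc : ∀ a b c, R a b c → R b c a)
    (asym : ∀ a b c, R a b c → ¬ R c b a)
    (trans : ∀ a b c d, R a b c → R a c d → R a b d)
    (total : ∀ a b c : X, a ≠ b → b ≠ c → a ≠ c → R a b c ∨ R a c b)
    (A B C : Set X)
    (hA : A.Nonempty) (hB : B.Nonempty) (hC : C.Nonempty)
    (hAB : Disjoint A B) (hBC : Disjoint B C) (hAC : Disjoint A C)
    (convA : ∀ a ∈ A, ∀ b ∈ A, ({x | R a x b} ∪ {a, b} ⊆ A) ∨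
      ({x | R b x a} ∪ {b, a} ⊆ A))
    (convB : ∀ a ∈ B, ∀ b ∈ B, ({x | R a x b} ∪ {a, b} ⊆ B) ∨
      ({x | R b x a} ∪ {b, a} ⊆ B))
    (convC : ∀ a ∈ C, ∀ b ∈ C, ({x | R a x b} ∪ {a, b} ⊆ C) ∨
      ({x | R b x a} ∪ {b, a} ⊆ C)) :
    (∀ a ∈ A, ∀ b ∈ B, ∀ c ∈ C, R a b c) ∨
    (∀ a ∈ A, ∀ b ∈ B, ∀ c ∈ C, R a c b) := by
  obtain ⟨a₀, ha₀⟩ := hA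
  obtain ⟨b₀, hb₀⟩ := hB
  obtain ⟨c₀, hc₀⟩ := hC
  have haB : a₀ ∉ B := Set.disjoint_left.mp hAB ha₀
  have haC : a₀ ∉ C := Set.disjoint_left.mp hAC ha₀
  have hbA : b₀ ∉ A := Set.disjoint_right.mp hAB hb₀
  have hbC : b₀ ∉ C := Set.disjoint_left.mp hBC hb₀
  have hcA : c₀ ∉ A := Set.disjoint_right.mp hAC hc₀
  have hcB : c₀ ∉ B := Set.disjoint_right.mp hBC hc₀
  rcases total a₀ b₀ c₀ (hAB.ne_of_mem ha₀ hb₀) (hBC.ne_of_mem hb₀ hc₀)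
      (hAC.ne_of_mem ha₀ hc₀) with h₀ | h₀
  · left
    intro a ha b hb c hc
    -- vary b
    have s1 : R a₀ b c₀ := by
      rcases total a₀ b c₀ (hAB.ne_of_mem ha₀ hb) (hBC.ne_of_mem hb hc₀)
          (hAC.ne_of_mem ha₀ hc₀) with h | h
      · exact h
      · exact absurd (key15 R cyc trans B convB hb₀ hb haB hcB h₀ h) id
    -- vary c
    have s2 : R a₀ b c := by
      rcases total a₀ b c (hAB.ne_of_mem ha₀ hb) (hBC.ne_of_mem hb hc)
          (hAC.ne_of_mem ha₀ hc) with h | h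
      · exact h
      · exact absurd (key15 R cyc trans C convC hc₀ hc
          (Set.disjoint_left.mp hBC hb) haC (cyc _ _ _ s1)
          (cyc _ _ _ (cyc _ _ _ h))) id
    -- vary a
    rcases total a b c (hAB.ne_of_mem ha hb) (hBC.ne_of_mem hb hc)
        (hAC.ne_of_mem ha hc) with h | h
    · exact h
    · exact absurd (key15 R cyc trans A convA ha₀ ha
        (Set.disjoint_right.mp hAC hc) (Set.disjoint_right.mp hAB hb)
        (cyc _ _ _ (cyc _ _ _ s2)) (cyc _ _ _ h)) id
  · right
    intro a ha b hb c hc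
    -- vary c
    have s1 : R a₀ c b₀ := by
      rcases total a₀ c b₀ (hAC.ne_of_mem ha₀ hc) ((hBC.ne_of_mem hb₀ hc).symm)
          (hAB.ne_of_mem ha₀ hb₀) with h | h
      · exact h
      · exact absurd (key15 R cyc trans C convC hc₀ hc haC hbC h₀ h) id
    -- vary b
    have s2 : R a₀ c b := by
      rcases total a₀ c b (hAC.ne_of_mem ha₀ hc) ((hBC.ne_of_mem hb hc).symm)
          (hAB.ne_of_mem ha₀ hb) with h | h
      · exact h
      · exact absurd (key15 R cyc trans B convB hb₀ hb
          (Set.disjoint_right.mp hBC hc) haB (cyc _ _ _ s1)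
          (cyc _ _ _ (cyc _ _ _ h))) id
    -- vary a
    rcases total a c b (hAC.ne_of_mem ha hc) ((hBC.ne_of_mem hb hc).symm)
        (hAB.ne_of_mem ha hb) with h | h
    · exact h
    · exact absurd (key15 R cyc trans A convA ha₀ ha
        (Set.disjoint_right.mp hAB hb) (Set.disjoint_right.mp hAC hc)
        (cyc _ _ _ (cyc _ _ _ s2)) (cyc _ _ _ h)) id
end

section
/- Let p : X → Y be a c-order preserving map between circularly ordered sets. Then the preimage p⁻¹(I) of every convex subset I ⊆ Y is convex in X. -/
/-- The preimage of a convex set under a c-order preserving (COP) map between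
circularly ordered sets is convex. -/
theorem stmt17 {X Y : Type*} (RX : X → X → X → Prop) (RY : Y → Y → Y → Prop)
    (cycX : ∀ a b c, RX a b c → RX b c a)
    (asymX : ∀ a b c, RX a b c → ¬ RX c b a)
    (transX : ∀ a b c d, RX a b c → RX a c d → RX a b d)
    (totalX : ∀ a b c : X, a ≠ b → b ≠ c → a ≠ c → RX a b c ∨ RX a c b)
    (cycY : ∀ a b c, RY a b c → RY b c a)
    (asymY : ∀ a b c, RY a b c → ¬ RY c b a)
    (transY : ∀ a b c d, RY a b c → RY a c d → RY a b d)
    (totalY : ∀ a b c : Y, a ≠ b → b ≠ c → a ≠ c → RY a b c ∨ RY a c b)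
    (p : X → Y)
    (hCOP1 : ∀ a b c, RX a b c → p a ≠ p b → p b ≠ p c → p a ≠ p c →
      RY (p a) (p b) (p c))
    (hCOP2 : ∀ a c : X, p a = p c →
      (∀ x ∈ ({y | RX a y c} ∪ {a, c} : Set X), p x = p a) ∨
      (∀ x ∈ ({y | RX c y a} ∪ {c, a} : Set X), p x = p a))
    (I : Set Y)
    (hI : ∀ a ∈ I, ∀ b ∈ I, ({y | RY a y b} ∪ {a, b} ⊆ I) ∨
      ({y | RY b y a} ∪ {b, a} ⊆ I)) :
    ∀ a ∈ p ⁻¹' I, ∀ b ∈ p ⁻¹' I,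
      ({x | RX a x b} ∪ {a, b} ⊆ p ⁻¹' I) ∨
      ({x | RX b x a} ∪ {b, a} ⊆ p ⁻¹' I) := by
  intro a ha b hb
  by_cases hab : p a = p b
  · rcases hCOP2 a b hab with h | h
    · left; intro x hx
      have hx' := h x hx
      simp only [Set.mem_preimage]; rw [hx']; exact ha
    · right; intro x hx
      have hx' := h x hx
      simp only [Set.mem_preimage]; rw [hx']; exact ha
  · rcases hI (p a) ha (p b) hb with h | h
    · left; intro x hx
      simp only [Set.mem_preimage]
      apply h
      rcases hx with hx | (rfl | rfl)
      · by_cases h1 : p x = p a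
        · exact Or.inr (Or.inl h1)
        · by_cases h2 : p x = p b
          · exact Or.inr (Or.inr h2)
          · exact Or.inl (hCOP1 a x b hx (fun e => h1 e.symm) h2 hab)
      · exact Or.inr (Or.inl rfl)
      · exact Or.inr (Or.inr rfl)
    · right; intro x hx
      simp only [Set.mem_preimage]
      apply h
      rcases hx with hx | (rfl | rfl)
      · by_cases h1 : p x = p b
        · exact Or.inr (Or.inl h1)
        · by_cases h2 : p x = p a
          · exact Or.inr (Or.inr h2)
          · exact Or.inl (hCOP1 b x a hx (fun e => h1 e.symm) h2 (fun e => hab e.symm))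
      · exact Or.inr (Or.inl rfl)
      · exact Or.inr (Or.inr rfl)
end
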